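/- Let τ ∈ (0,1) and let p1, p2 ≥ 0 be integers with p1 ≡ p2 (mod 2), and set s := (p1+p2)/2. Then there exists a constant K > 0 such that for all N ≥ 1: |M_τ(p1,p2,N) − C1(p1,p2)·N^{s+1} − C2(p1,p2)·N^{s}| ≤ K·N^{s−1}. -/

import Mathlib

open Finset Filter

/-- `1/n!` for an integer `n`, with the convention that `1/n! = 0` for negative `n`. -/
noncomputable def invfac (n : ℤ) : ℝ := if 0 ≤ n then ((n.toNat).factorial : ℝ)⁻¹ else 0

/-- Binomial coefficient `binom(n, m)` for `n : ℕ`, `m : ℤ`, zero for `m < 0` or `m > n`. -/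
noncomputable def zbinom (n : ℕ) (m : ℤ) : ℝ :=
  if 0 ≤ m ∧ m ≤ (n : ℤ) then (n.choose m.toNat : ℝ) else 0

/-- The Hermite expansion coefficients `A_τ(p, j, k)`. -/
noncomputable def Aher (τ : ℝ) (p : ℕ) (j : ℤ) (k : ℕ) : ℝ :=
  if 0 ≤ j ∧ |j - (k : ℤ)| ≤ (p : ℤ) ∧ (j - (k : ℤ)) % 2 = (p : ℤ) % 2 then
    τ ^ ((((p : ℤ) + k - j) / 2).toNat) *
      ∑ l ∈ Finset.range (p / 2 + 1),
        (p.factorial : ℝ) * ((2 : ℝ) ^ l * (l.factorial : ℝ))⁻¹ *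
          invfac (((p : ℤ) - k + j) / 2 - l) *
          zbinom k (((p : ℤ) + k - j) / 2 - l)
  else 0

/-- `I_p = {−p, −p+2, …, p−2, p}`, the integers between `−p` and `p` with the parity of `p`. -/
noncomputable def Ip (p : ℕ) : Finset ℤ :=
  (Finset.Icc (-(p : ℤ)) (p : ℤ)).filter fun r => r % 2 = (p : ℤ) % 2

/-- The spectral moment `M_τ(p1, p2, N)` of the complex elliptic Ginibre ensemble. -/
noncomputable def Mell (τ : ℝ) (p1 p2 N : ℕ) : ℝ :=
  ∑ k ∈ Finset.range N,
    ∑ r ∈ (Ip (min p1 p2)).filter (fun r => r ≤ (k : ℤ)),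
      ((((k : ℤ) - r).toNat.factorial : ℝ) / (k.factorial : ℝ)) *
        Aher τ p1 ((k : ℤ) - r) k * Aher τ p2 ((k : ℤ) - r) k

/-- The leading moment coefficient `C1(p1, p2)` of the elliptic law. -/
noncomputable def C1 (τ : ℝ) (p1 p2 : ℕ) : ℝ :=
  (((p1 + p2) / 2 + 1 : ℕ) : ℝ)⁻¹ *
    ∑ r ∈ Ip (min p1 p2),
      τ ^ (((((p1 : ℤ) + p2) / 2) + r).toNat) *
        zbinom p1 (((p1 : ℤ) + r) / 2) * zbinom p2 (((p2 : ℤ) + r) / 2)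


/-- The subleading moment coefficient `C2(p1, p2)`. -/
noncomputable def C2 (τ : ℝ) (p1 p2 : ℕ) : ℝ :=
  - ∑ r ∈ Ip (min p1 p2),
      τ ^ (((((p1 : ℤ) + p2) / 2) + r).toNat) *
        zbinom p1 (((p1 : ℤ) + r) / 2) * zbinom p2 (((p2 : ℤ) + r) / 2) * ((r : ℝ) / 2)

/-! For `k ≥ r`, writing `binom(k, m) = k (k - 1) ⋯ (k - m + 1) / m!` turns the `r`-th summand of
`M_τ(p1, p2, N)` into a polynomial in `k` of degree `s = (p1 + p2) / 2`, and this polynomial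
vanishes at the integers `0 ≤ k < r`, where the summand is absent. Hence `M_τ(p1, p2, N)` is
exactly a polynomial in `N` of degree `s + 1` (Faulhaber's formula), and the bound follows once its
two leading coefficients are identified with `C1` and `C2`. They are computed by tracking only the
two leading coefficients of every polynomial through products, shifts and sums; the leading one of a
summand is `τ^(s + r) binom(p1, (p1 + r)/2) binom(p2, (p2 + r)/2)`, and the next one is that times
`s (1 - r) / 2`. -/

open Polynomial

/-- `P = a X^d + b X^(d-1) + (terms of lower degree)`. The coefficient `b` is read off `X * P`,
so that `d = 0` forces `b = 0`. -/
structure HasLeadingCoeffs {R : Type*} [CommRing R] (P : R[X]) (d : ℕ) (a b : R) : Prop where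
  natDegree_le : P.natDegree ≤ d
  coeff_eq : P.coeff d = a
  coeff_X_mul_eq : (X * P).coeff d = b

namespace HasLeadingCoeffs

variable {R : Type*} [CommRing R] {P Q : R[X]} {d e : ℕ} {a b a' b' : R}

theorem of_coeff (hdeg : P.natDegree ≤ d + 1) (ha : P.coeff (d + 1) = a) (hb : P.coeff d = b) :
    HasLeadingCoeffs P (d + 1) a b :=
  ⟨hdeg, ha, by rw [Polynomial.coeff_X_mul, hb]⟩

theorem coeff_pred (h : HasLeadingCoeffs P (d + 1) a b) : P.coeff d = b := by
  rw [← Polynomial.coeff_X_mul, h.coeff_X_mul_eq]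

theorem of_natDegree_le (h : P.natDegree ≤ d) : HasLeadingCoeffs P (d + 1) 0 (P.coeff d) :=
  of_coeff (h.trans d.le_succ) (coeff_eq_zero_of_natDegree_lt (by omega)) rfl

theorem of_natDegree_add_two_le (h : P.natDegree + 2 ≤ d) : HasLeadingCoeffs P d 0 0 := by
  obtain ⟨d, rfl⟩ : ∃ n, d = n + 1 := ⟨d - 1, by omega⟩
  simpa [coeff_eq_zero_of_natDegree_lt (show P.natDegree < d by omega)] using
    of_natDegree_le (P := P) (d := d) (by omega)

theorem add (hP : HasLeadingCoeffs P d a b) (hQ : HasLeadingCoeffs Q d a' b') :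
    HasLeadingCoeffs (P + Q) d (a + a') (b + b') where
  natDegree_le := natDegree_add_le_of_degree_le hP.natDegree_le hQ.natDegree_le
  coeff_eq := by rw [coeff_add, hP.coeff_eq, hQ.coeff_eq]
  coeff_X_mul_eq := by rw [mul_add, coeff_add, hP.coeff_X_mul_eq, hQ.coeff_X_mul_eq]

theorem sum {ι : Type*} (s : Finset ι) {P : ι → R[X]} {a b : ι → R}
    (h : ∀ i ∈ s, HasLeadingCoeffs (P i) d (a i) (b i)) :
    HasLeadingCoeffs (∑ i ∈ s, P i) d (∑ i ∈ s, a i) (∑ i ∈ s, b i) where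
  natDegree_le := natDegree_sum_le_of_forall_le _ _ fun i hi => (h i hi).natDegree_le
  coeff_eq := by rw [finsetSum_coeff]; exact Finset.sum_congr rfl fun i hi => (h i hi).coeff_eq
  coeff_X_mul_eq := by
    rw [Finset.mul_sum, finsetSum_coeff]
    exact Finset.sum_congr rfl fun i hi => (h i hi).coeff_X_mul_eq

theorem C_mul (hP : HasLeadingCoeffs P d a b) (c : R) :
    HasLeadingCoeffs (C c * P) d (c * a) (c * b) where
  natDegree_le := (natDegree_C_mul_le c P).trans hP.natDegree_le
  coeff_eq := by rw [coeff_C_mul, hP.coeff_eq]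
  coeff_X_mul_eq := by rw [mul_left_comm, coeff_C_mul, hP.coeff_X_mul_eq]

theorem mul (hP : HasLeadingCoeffs P d a b) (hQ : HasLeadingCoeffs Q e a' b') :
    HasLeadingCoeffs (P * Q) (d + e) (a * a') (a * b' + b * a') where
  natDegree_le := natDegree_mul_le.trans (add_le_add hP.natDegree_le hQ.natDegree_le)
  coeff_eq := by
    rw [coeff_mul_add_eq_of_natDegree_le hP.natDegree_le hQ.natDegree_le, hP.coeff_eq,
      hQ.coeff_eq]
  coeff_X_mul_eq := by
    -- `X * P = a X^(d+1) + P₀` with `P₀` of degree at most `d`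
    set P₀ := X * P - C a * X ^ (d + 1) with hP₀_def
    have hP₀ : P₀.natDegree ≤ d := by
      rw [natDegree_le_iff_coeff_eq_zero]
      rintro (_ | n) hn
      · omega
      · rw [hP₀_def, coeff_sub, Polynomial.coeff_X_mul, coeff_C_mul_X_pow]
        rcases (Nat.lt_succ_iff.mp hn).eq_or_lt with rfl | hlt
        · rw [if_pos rfl, hP.coeff_eq, sub_self]
        · rw [if_neg (by omega), coeff_eq_zero_of_natDegree_lt (hP.natDegree_le.trans_lt hlt),
            sub_zero]
    have hsplit : X * (P * Q) = P₀ * Q + C a * (X ^ d * (X * Q)) := by rw [hP₀_def]; ring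
    rw [hsplit, coeff_add, coeff_mul_add_eq_of_natDegree_le hP₀ hQ.natDegree_le, coeff_C_mul,
      add_comm d e, coeff_X_pow_mul, hQ.coeff_X_mul_eq, hQ.coeff_eq, hP₀_def, coeff_sub,
      hP.coeff_X_mul_eq, coeff_C_mul_X_pow, if_neg (by omega), sub_zero]
    ring

theorem zero : HasLeadingCoeffs (0 : R[X]) d 0 0 := ⟨by simp, by simp, by simp⟩

theorem X_sub_C (c : R) : HasLeadingCoeffs (X - C c) 1 1 (-c) :=
  of_coeff (natDegree_X_sub_C_le c) (by simp) (by simp)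

end HasLeadingCoeffs

theorem hasLeadingCoeffs_descPochhammer_comp {R : Type*} [CommRing R] (n : ℕ) (x : R) :
    HasLeadingCoeffs ((descPochhammer R n).comp (X - C x)) n 1 (-(n * x + (n.choose 2 : R))) := by
  induction n with
  | zero => exact ⟨by simp, by simp, by simp⟩
  | succ n ih =>
    have h := ih.mul (HasLeadingCoeffs.X_sub_C (x + n))
    rw [descPochhammer_succ_right, mul_comp, show ((X : R[X]) - (n : R[X])).comp (X - C x)
      = X - C (x + n) by simp; ring]
    convert h using 1
    · ring
    · push_cast [Nat.choose_succ_succ', Nat.choose_one_right]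
      ring

noncomputable def faulhaber (d : ℕ) : ℝ[X] :=
  ∑ i ∈ Finset.range (d + 1),
    C ((_root_.bernoulli i : ℝ) * (d + 1).choose i / (d + 1)) * X ^ (d + 1 - i)

theorem faulhaber_eval (d n : ℕ) :
    (faulhaber d).eval (n : ℝ) = ∑ k ∈ Finset.range n, (k : ℝ) ^ d := by
  have h := congrArg (fun q : ℚ => (q : ℝ)) (sum_range_pow n d)
  push_cast at h
  rw [h, faulhaber, eval_finsetSum]
  exact Finset.sum_congr rfl fun i _ => by simp only [eval_mul, eval_C, eval_pow, eval_X]; ring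

theorem faulhaber_coeff {d i : ℕ} (hi : i ≤ d) :
    (faulhaber d).coeff (d + 1 - i) = (_root_.bernoulli i : ℝ) * (d + 1).choose i / (d + 1) := by
  rw [faulhaber, finsetSum_coeff, Finset.sum_eq_single_of_mem i (Finset.mem_range.mpr (by omega))]
  · rw [coeff_C_mul_X_pow, if_pos rfl]
  · intro j hj hji
    rw [coeff_C_mul_X_pow, if_neg (by have := Finset.mem_range.mp hj; omega)]

theorem hasLeadingCoeffs_faulhaber (d : ℕ) :
    HasLeadingCoeffs (faulhaber d) (d + 1) (1 / (d + 1)) (if d = 0 then 0 else -1 / 2) := by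
  refine HasLeadingCoeffs.of_coeff ?_ ?_ ?_
  · refine natDegree_sum_le_of_forall_le _ _ fun i _ => (natDegree_C_mul_le _ _).trans ?_
    simp
  · simpa using faulhaber_coeff (d := d) (Nat.zero_le _)
  · split_ifs with hd
    · subst hd; simp [faulhaber]
    · have h := faulhaber_coeff (d := d) (i := 1) (by omega)
      rw [Nat.add_sub_cancel, _root_.bernoulli_one, Nat.choose_one_right] at h
      rw [h]
      push_cast
      field_simp

theorem HasLeadingCoeffs.exists_eval_eq_sum_range {Q : ℝ[X]} {s : ℕ} {a b : ℝ}
    (hQ : HasLeadingCoeffs Q s a b) :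
    ∃ W : ℝ[X], (∀ n : ℕ, W.eval (n : ℝ) = ∑ k ∈ Finset.range n, Q.eval (k : ℝ)) ∧
      HasLeadingCoeffs W (s + 1) (a / (s + 1)) (if s = 0 then 0 else b / s - a / 2) := by
  refine ⟨∑ d ∈ Finset.range (s + 1), C (Q.coeff d) * faulhaber d, fun n => ?_, ?_⟩
  · simp only [eval_finsetSum, eval_mul, eval_C, faulhaber_eval, Finset.mul_sum]
    rw [Finset.sum_comm]
    refine Finset.sum_congr rfl fun k _ => ?_
    rw [eval_eq_sum_range' (Nat.lt_succ_of_le hQ.natDegree_le)]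
  · cases s with
    | zero =>
      rw [Finset.sum_range_one]
      convert (hasLeadingCoeffs_faulhaber 0).C_mul (Q.coeff 0) using 1 <;> simp [hQ.coeff_eq]
    | succ t =>
      rw [Finset.sum_range_succ, Finset.sum_range_succ]
      have hlow :
          HasLeadingCoeffs (∑ d ∈ Finset.range t, C (Q.coeff d) * faulhaber d) (t + 2) 0 0 :=
        HasLeadingCoeffs.of_natDegree_add_two_le <| by
          refine add_le_add_left (natDegree_sum_le_of_forall_le _ _ fun d hd => ?_) 2
          exact (natDegree_C_mul_le _ _).trans ((hasLeadingCoeffs_faulhaber d).natDegree_le.trans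
            (Finset.mem_range.mp hd))
      have hnext := (HasLeadingCoeffs.of_natDegree_le
        (hasLeadingCoeffs_faulhaber t).natDegree_le).C_mul (Q.coeff t)
      have htop := (hasLeadingCoeffs_faulhaber (t + 1)).C_mul (Q.coeff (t + 1))
      convert (hlow.add hnext).add htop using 1
      · rw [hQ.coeff_eq]; push_cast; ring
      · rw [if_neg t.succ_ne_zero, if_neg t.succ_ne_zero, (hasLeadingCoeffs_faulhaber t).coeff_eq,
          hQ.coeff_pred, hQ.coeff_eq]
        push_cast; ring

theorem abs_eval_le_of_coeff_eq_zero {D : ℝ[X]} {d : ℕ} (hD : ∀ m, d ≤ m → D.coeff m = 0)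
    {x : ℝ} (hx : 1 ≤ x) :
    |D.eval x| ≤ (∑ i ∈ Finset.range d, |D.coeff i|) * x ^ ((d : ℤ) - 1) := by
  have hdeg : D.natDegree < d + 1 :=
    Nat.lt_succ_of_le (natDegree_le_iff_coeff_eq_zero.mpr fun m hm => hD m hm.le)
  rw [eval_eq_sum_range' hdeg, Finset.sum_range_succ, hD d le_rfl, zero_mul, add_zero,
    Finset.sum_mul]
  refine (Finset.abs_sum_le_sum_abs _ _).trans (Finset.sum_le_sum fun i hi => ?_)
  rw [abs_mul, abs_of_nonneg (pow_nonneg (zero_le_one.trans hx) i), ← zpow_natCast]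
  have hid : (i : ℤ) ≤ d - 1 := by have := Finset.mem_range.mp hi; omega
  exact mul_le_mul_of_nonneg_left (zpow_le_zpow_right₀ hx hid) (abs_nonneg _)

theorem HasLeadingCoeffs.exists_abs_eval_sub_le {W : ℝ[X]} {d : ℕ} {a b : ℝ}
    (hW : HasLeadingCoeffs W (d + 1) a b) :
    ∃ K > 0, ∀ x : ℝ, 1 ≤ x →
      |W.eval x - a * x ^ (d + 1) - b * x ^ d| ≤ K * x ^ ((d : ℤ) - 1) := by
  set D := W - C a * X ^ (d + 1) - C b * X ^ d with hD_def
  have hD : ∀ m, d ≤ m → D.coeff m = 0 := by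
    intro m hm
    simp only [hD_def, coeff_sub, coeff_C_mul_X_pow]
    rcases hm.eq_or_lt with rfl | hlt
    · rw [if_neg (by omega), if_pos rfl, hW.coeff_pred]; ring
    rcases (Nat.succ_le_of_lt hlt).eq_or_lt with rfl | hlt'
    · rw [if_pos rfl, if_neg (by omega), hW.coeff_eq]; ring
    · rw [if_neg (by omega), if_neg (by omega),
        coeff_eq_zero_of_natDegree_lt (hW.natDegree_le.trans_lt hlt')]; ring
  refine ⟨∑ i ∈ Finset.range d, |D.coeff i| + 1, by positivity, fun x hx => ?_⟩
  have hbound := abs_eval_le_of_coeff_eq_zero hD hx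
  have hpow : 0 ≤ x ^ ((d : ℤ) - 1) := zpow_nonneg (zero_le_one.trans hx) _
  simp only [hD_def, eval_sub, eval_mul, eval_C, eval_pow, eval_X] at hbound
  nlinarith

theorem Nat.factorial_mul_descFactorial_comm {n n' a a' : ℕ} (h : n' + a = n + a') :
    n'.factorial * n.descFactorial a = n.factorial * n'.descFactorial a' := by
  rcases le_or_gt a n with ha | ha
  · have ha' : a' ≤ n' := by omega
    have hsub : n - a = n' - a' := by omega
    rw [← Nat.factorial_mul_descFactorial ha, ← Nat.factorial_mul_descFactorial ha', hsub]
    ring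
  · rw [Nat.descFactorial_eq_zero_iff_lt.mpr ha, Nat.descFactorial_eq_zero_iff_lt.mpr (by omega)]
    ring

theorem invfac_natCast (n : ℕ) : invfac n = (n.factorial : ℝ)⁻¹ := by
  simp [invfac]

theorem invfac_of_neg {n : ℤ} (h : n < 0) : invfac n = 0 := by
  simp [invfac, not_le.mpr h]

theorem zbinom_eq_invfac_mul_descFactorial (k : ℕ) (m : ℤ) :
    zbinom k m = invfac m * k.descFactorial m.toNat := by
  rcases lt_or_ge m 0 with hm | hm
  · rw [invfac_of_neg hm, zbinom, if_neg (by omega), zero_mul]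
  obtain ⟨m, rfl⟩ := Int.eq_ofNat_of_zero_le hm
  rw [invfac_natCast, Int.toNat_natCast]
  rcases le_or_gt m k with hmk | hmk
  · rw [zbinom, if_pos (by omega), Int.toNat_natCast, Nat.descFactorial_eq_factorial_mul_choose]
    push_cast
    field_simp
  · rw [zbinom, if_neg (by omega), Nat.descFactorial_eq_zero_iff_lt.mpr hmk]
    simp

noncomputable def hermiteCoeff (M M' l : ℕ) : ℝ :=
  (M + M').factorial * ((2 : ℝ) ^ l * l.factorial)⁻¹ * invfac ((M' : ℤ) - l) *
    invfac ((M : ℤ) - l)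

/-- Writing `binom(k, m) = k (k - 1) ⋯ (k - m + 1) / m!`, the sum defining
`A_τ(M + M', k - (M - M'), k)` becomes `τ^M` times this polynomial evaluated at `k`. -/
noncomputable def hermiteFalling (M M' : ℕ) : ℝ[X] :=
  ∑ l ∈ Finset.range ((M + M') / 2 + 1), C (hermiteCoeff M M' l) * descPochhammer ℝ (M - l)

theorem hermiteCoeff_comm (M M' l : ℕ) : hermiteCoeff M M' l = hermiteCoeff M' M l := by
  simp only [hermiteCoeff, add_comm M M']
  ring

theorem hermiteCoeff_eq_zero {M M' l : ℕ} (h : M < l ∨ M' < l) : hermiteCoeff M M' l = 0 := by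
  rcases h with h | h
  · rw [hermiteCoeff, invfac_of_neg (n := (M : ℤ) - l) (by omega), mul_zero]
  · rw [hermiteCoeff, invfac_of_neg (n := (M' : ℤ) - l) (by omega), mul_zero, zero_mul]

theorem hermiteCoeff_zero (M M' : ℕ) : hermiteCoeff M M' 0 = (M + M').choose M := by
  rw [hermiteCoeff, Nat.cast_add_choose]
  simp [invfac_natCast, div_eq_mul_inv]
  ring

theorem hermiteCoeff_one (M M' : ℕ) :
    hermiteCoeff M M' 1 = (M + M').choose M * (M * M' / 2) := by
  rcases M.eq_zero_or_pos with rfl | hM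
  · simp [hermiteCoeff_eq_zero]
  rcases M'.eq_zero_or_pos with rfl | hM'
  · simp [hermiteCoeff_eq_zero]
  obtain ⟨m, rfl⟩ := Nat.exists_eq_succ_of_ne_zero hM.ne'
  obtain ⟨m', rfl⟩ := Nat.exists_eq_succ_of_ne_zero hM'.ne'
  rw [hermiteCoeff, Nat.cast_add_choose, show ((m + 1 : ℕ) : ℤ) - (1 : ℕ) = m by push_cast; ring,
    show ((m' + 1 : ℕ) : ℤ) - (1 : ℕ) = m' by push_cast; ring, invfac_natCast, invfac_natCast,
    Nat.factorial_succ m, Nat.factorial_succ m', Nat.factorial_one]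
  push_cast
  field_simp

theorem hermiteFalling_eval (M M' k : ℕ) :
    (hermiteFalling M M').eval (k : ℝ) =
      ∑ l ∈ Finset.range ((M + M') / 2 + 1), hermiteCoeff M M' l * k.descFactorial (M - l) := by
  simp [hermiteFalling, eval_finsetSum, descPochhammer_eval_eq_descFactorial]

theorem hermiteFalling_eval_eq_zero {M M' k : ℕ} (h : k + M' < M) :
    (hermiteFalling M M').eval (k : ℝ) = 0 := by
  rw [hermiteFalling_eval]
  refine Finset.sum_eq_zero fun l _ => ?_
  rcases le_or_gt l M' with hl | hl
  · rw [Nat.descFactorial_eq_zero_iff_lt.mpr (by omega), Nat.cast_zero, mul_zero]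
  · rw [hermiteCoeff_eq_zero (Or.inr hl), zero_mul]

theorem factorial_mul_hermiteFalling_eval {M M' j k : ℕ} (h : j + M = k + M') :
    j.factorial * (hermiteFalling M M').eval (k : ℝ) =
      k.factorial * (hermiteFalling M' M).eval (j : ℝ) := by
  rw [hermiteFalling_eval, hermiteFalling_eval, add_comm M', Finset.mul_sum, Finset.mul_sum]
  refine Finset.sum_congr rfl fun l _ => ?_
  rw [hermiteCoeff_comm M]
  rcases le_or_gt l M with hlM | hlM
  · rcases le_or_gt l M' with hlM' | hlM'
    · have hdesc : (j.factorial : ℝ) * k.descFactorial (M - l) =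
          k.factorial * j.descFactorial (M' - l) := by
        exact_mod_cast Nat.factorial_mul_descFactorial_comm (by omega)
      linear_combination hermiteCoeff M' M l * hdesc
    · rw [hermiteCoeff_eq_zero (Or.inl hlM')]; ring
  · rw [hermiteCoeff_eq_zero (Or.inr hlM)]; ring

theorem Aher_eq_pow_mul_hermiteFalling_eval (τ : ℝ) {p M M' k : ℕ} {r : ℤ} (hp : M + M' = p)
    (hr : (M : ℤ) - M' = r) (hk : r ≤ k) :
    Aher τ p ((k : ℤ) - r) k = τ ^ M * (hermiteFalling M M').eval (k : ℝ) := by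
  subst hp hr
  have hcond : 0 ≤ (k : ℤ) - (M - M') ∧ |(k : ℤ) - (M - M') - k| ≤ ((M + M' : ℕ) : ℤ) ∧
      ((k : ℤ) - (M - M') - k) % 2 = ((M + M' : ℕ) : ℤ) % 2 := by
    refine ⟨by omega, abs_le.mpr ⟨by omega, by omega⟩, by omega⟩
  rw [Aher, if_pos hcond, hermiteFalling_eval,
    show ((((M + M' : ℕ) : ℤ) + k - (k - (M - M'))) / 2).toNat = M by omega, Finset.mul_sum,
    Finset.mul_sum]
  refine Finset.sum_congr rfl fun l _ => ?_
  rw [show (((M + M' : ℕ) : ℤ) - k + (k - (M - M'))) / 2 - l = (M' : ℤ) - l by omega,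
    show (((M + M' : ℕ) : ℤ) + k - (k - (M - M'))) / 2 - l = (M : ℤ) - l by omega,
    zbinom_eq_invfac_mul_descFactorial, show ((M : ℤ) - l).toNat = M - l by omega, hermiteCoeff]
  ring

theorem hasLeadingCoeffs_hermiteFalling_comp (M M' : ℕ) (x : ℝ) :
    HasLeadingCoeffs ((hermiteFalling M M').comp (X - C x)) M ((M + M').choose M)
      ((M + M').choose M * (M * (M' - M + 1) / 2 - M * x)) := by
  set c := hermiteCoeff M M'
  -- only the terms `l = 0, 1` reach the degrees `M` and `M - 1`
  have hterm : ∀ l ∈ Finset.range ((M + M') / 2 + 1),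
      HasLeadingCoeffs (C (c l) * (descPochhammer ℝ (M - l)).comp (X - C x)) M
        (if l = 0 then c 0 else 0)
        ((if l = 0 then c 0 * -(M * x + (M.choose 2 : ℝ)) else 0) + if l = 1 then c 1 else 0) := by
    intro l _
    rcases l with _ | _ | l
    · simpa using (hasLeadingCoeffs_descPochhammer_comp M x).C_mul (c 0)
    · rcases M with _ | m
      · simp [c, hermiteCoeff_eq_zero, HasLeadingCoeffs.zero]
      · simpa [(hasLeadingCoeffs_descPochhammer_comp m x).coeff_eq] using
          (HasLeadingCoeffs.of_natDegree_le
            (hasLeadingCoeffs_descPochhammer_comp m x).natDegree_le).C_mul (c 1)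
    · rcases le_or_gt (l + 2) M with hl | hl
      · have hdeg := (natDegree_C_mul_le (c (l + 1 + 1)) _).trans
          (hasLeadingCoeffs_descPochhammer_comp (M - (l + 1 + 1)) x).natDegree_le
        simpa using HasLeadingCoeffs.of_natDegree_add_two_le (d := M) (by omega)
      · simp [c, hermiteCoeff_eq_zero (Or.inl hl), HasLeadingCoeffs.zero]
  rw [hermiteFalling, Polynomial.sum_comp]
  simp only [mul_comp, C_comp]
  convert HasLeadingCoeffs.sum _ hterm using 1
  · rw [Finset.sum_ite_eq', if_pos (by simp)]
    exact (hermiteCoeff_zero M M').symm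
  · rw [Finset.sum_add_distrib, Finset.sum_ite_eq', Finset.sum_ite_eq', if_pos (by simp)]
    have hc1 : (if 1 ∈ Finset.range ((M + M') / 2 + 1) then c 1 else 0) = c 1 := by
      split_ifs with h
      · rfl
      · rw [Finset.mem_range] at h
        exact (hermiteCoeff_eq_zero (by omega)).symm
    rw [hc1, show c 0 = _ from hermiteCoeff_zero M M', show c 1 = _ from hermiteCoeff_one M M',
      Nat.cast_choose_two]
    ring

/-- The summand of `M_τ` for `r = M1 - M1' = M2 - M2'`, `p1 = M1 + M1'`, `p2 = M2 + M2'`, as a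
polynomial in `k`: the factor `(k - r)! / k!` swaps `M1, M1'` in the first Hermite factor and
moves its argument to `k - r`. -/
noncomputable def momentTerm (τ : ℝ) (M1 M1' M2 M2' : ℕ) : ℝ[X] :=
  C (τ ^ (M1 + M2)) * (hermiteFalling M1' M1).comp (X - C ((M1 : ℝ) - M1')) *
    hermiteFalling M2 M2'

theorem momentTerm_eval (τ : ℝ) {p1 p2 M1 M1' M2 M2' : ℕ} {r : ℤ} (hp1 : M1 + M1' = p1)
    (hp2 : M2 + M2' = p2) (hr1 : (M1 : ℤ) - M1' = r) (hr2 : (M2 : ℤ) - M2' = r) (k : ℕ) :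
    (momentTerm τ M1 M1' M2 M2').eval (k : ℝ) =
      if r ≤ k then
        ((((k : ℤ) - r).toNat.factorial : ℝ) / (k.factorial : ℝ)) *
          Aher τ p1 ((k : ℤ) - r) k * Aher τ p2 ((k : ℤ) - r) k
      else 0 := by
  simp only [momentTerm, eval_mul, eval_C, eval_comp, eval_sub, eval_X]
  split_ifs with hk
  · obtain ⟨j, hj⟩ : ∃ j : ℕ, (j : ℤ) = k - r := ⟨((k : ℤ) - r).toNat, by omega⟩
    rw [Aher_eq_pow_mul_hermiteFalling_eval τ hp1 hr1 hk,
      Aher_eq_pow_mul_hermiteFalling_eval τ hp2 hr2 hk, ← hj, Int.toNat_natCast,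
      show (k : ℝ) - ((M1 : ℝ) - M1') = j by
        rw [← hr1] at hj; exact_mod_cast (congrArg (Int.cast : ℤ → ℝ) hj).symm]
    have hswap := factorial_mul_hermiteFalling_eval (by omega : j + M1 = k + M1')
    have hk0 : (k.factorial : ℝ) ≠ 0 := by positivity
    rw [eq_comm, div_mul_eq_mul_div, div_mul_eq_mul_div, div_eq_iff hk0]
    linear_combination (τ ^ (M1 + M2) * (hermiteFalling M2 M2').eval (k : ℝ)) * hswap
  · rw [hermiteFalling_eval_eq_zero (by omega : k + M2' < M2)]
    ring

theorem hasLeadingCoeffs_momentTerm (τ : ℝ) {M1 M1' M2 M2' : ℕ}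
    (hr : (M1 : ℤ) - M1' = M2 - M2') :
    HasLeadingCoeffs (momentTerm τ M1 M1' M2 M2') (M1' + M2)
      (τ ^ (M1 + M2) * (M1' + M1).choose M1' * (M2 + M2').choose M2)
      (τ ^ (M1 + M2) * (M1' + M1).choose M1' * (M2 + M2').choose M2 *
        ((M1' + M2) * (1 - ((M1 : ℝ) - M1')) / 2)) := by
  have hr' : (M2' : ℝ) = M2 - M1 + M1' := by
    have : (M2' : ℤ) = M2 - M1 + M1' := by omega
    exact_mod_cast this
  have h := ((hasLeadingCoeffs_hermiteFalling_comp M1' M1 ((M1 : ℝ) - M1')).C_mul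
    (τ ^ (M1 + M2))).mul (by simpa using hasLeadingCoeffs_hermiteFalling_comp M2 M2' 0)
  rw [momentTerm]
  convert h using 1
  rw [hr']
  ring

noncomputable def halfAdd (p : ℕ) (r : ℤ) : ℕ := (((p : ℤ) + r) / 2).toNat

theorem halfAdd_spec {p1 p2 : ℕ} (hpar : p1 % 2 = p2 % 2) {r : ℤ} (hr : r ∈ Ip (min p1 p2)) :
    halfAdd p1 r + halfAdd p1 (-r) = p1 ∧ halfAdd p2 r + halfAdd p2 (-r) = p2 ∧
      (halfAdd p1 r : ℤ) - halfAdd p1 (-r) = r ∧ (halfAdd p2 r : ℤ) - halfAdd p2 (-r) = r := by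
  simp only [Ip, Finset.mem_filter, Finset.mem_Icc] at hr
  simp only [halfAdd]
  omega

noncomputable def momentPoly (τ : ℝ) (p1 p2 : ℕ) : ℝ[X] :=
  ∑ r ∈ Ip (min p1 p2),
    momentTerm τ (halfAdd p1 r) (halfAdd p1 (-r)) (halfAdd p2 r) (halfAdd p2 (-r))

theorem Mell_eq_sum_eval_momentPoly (τ : ℝ) {p1 p2 : ℕ} (hpar : p1 % 2 = p2 % 2) (N : ℕ) :
    Mell τ p1 p2 N = ∑ k ∈ Finset.range N, (momentPoly τ p1 p2).eval (k : ℝ) := by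
  refine Finset.sum_congr rfl fun k _ => ?_
  rw [momentPoly, eval_finsetSum, Finset.sum_filter]
  refine Finset.sum_congr rfl fun r hr => ?_
  obtain ⟨hp1, hp2, hr1, hr2⟩ := halfAdd_spec hpar hr
  rw [momentTerm_eval τ hp1 hp2 hr1 hr2]

noncomputable def momentWeight (τ : ℝ) (p1 p2 : ℕ) (r : ℤ) : ℝ :=
  τ ^ (((((p1 : ℤ) + p2) / 2) + r).toNat) *
    zbinom p1 (((p1 : ℤ) + r) / 2) * zbinom p2 (((p2 : ℤ) + r) / 2)

theorem momentWeight_eq (τ : ℝ) {p1 p2 M1 M1' M2 M2' : ℕ} {r : ℤ} (hp1 : M1 + M1' = p1)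
    (hp2 : M2 + M2' = p2) (hr1 : (M1 : ℤ) - M1' = r) (hr2 : (M2 : ℤ) - M2' = r) :
    momentWeight τ p1 p2 r = τ ^ (M1 + M2) * (M1' + M1).choose M1' * (M2 + M2').choose M2 := by
  have zbinom_half : ∀ {p M M' : ℕ}, M + M' = p → (M : ℤ) - M' = r →
      zbinom p (((p : ℤ) + r) / 2) = p.choose M := by
    intro p M M' hp hr
    rw [zbinom, if_pos (by omega), show (((p : ℤ) + r) / 2).toNat = M by omega]
  rw [momentWeight, zbinom_half hp1 hr1, zbinom_half hp2 hr2, add_comm M1',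
    ← @Nat.choose_symm_add M1 M1', hp1, hp2,
    show ((((p1 : ℤ) + p2) / 2) + r).toNat = M1 + M2 by omega]

theorem hasLeadingCoeffs_momentPoly (τ : ℝ) {p1 p2 : ℕ} (hpar : p1 % 2 = p2 % 2) :
    HasLeadingCoeffs (momentPoly τ p1 p2) ((p1 + p2) / 2)
      (∑ r ∈ Ip (min p1 p2), momentWeight τ p1 p2 r)
      (∑ r ∈ Ip (min p1 p2), momentWeight τ p1 p2 r * (((p1 + p2) / 2 : ℕ) * (1 - r) / 2)) := by
  refine HasLeadingCoeffs.sum _ fun r hr => ?_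
  obtain ⟨hp1, hp2, hr1, hr2⟩ := halfAdd_spec hpar hr
  have hs : halfAdd p1 (-r) + halfAdd p2 r = (p1 + p2) / 2 := by omega
  have hr' : ((halfAdd p1 r : ℝ) - halfAdd p1 (-r)) = r := by exact_mod_cast hr1
  convert hasLeadingCoeffs_momentTerm τ (hr1.trans hr2.symm) using 1
  · exact hs.symm
  · exact momentWeight_eq τ hp1 hp2 hr1 hr2
  · rw [momentWeight_eq τ hp1 hp2 hr1 hr2, hr', ← hs]
    push_cast
    ring

theorem exists_hasLeadingCoeffs_eval_eq_Mell (τ : ℝ) {p1 p2 : ℕ} (hpar : p1 % 2 = p2 % 2) :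
    ∃ W : ℝ[X], (∀ N : ℕ, Mell τ p1 p2 N = W.eval (N : ℝ)) ∧
      HasLeadingCoeffs W ((p1 + p2) / 2 + 1) (C1 τ p1 p2) (C2 τ p1 p2) := by
  obtain ⟨W, hW, hlead⟩ := (hasLeadingCoeffs_momentPoly τ hpar).exists_eval_eq_sum_range
  refine ⟨W, fun N => by rw [Mell_eq_sum_eval_momentPoly τ hpar, hW], ?_⟩
  convert hlead using 1
  · change (((p1 + p2) / 2 + 1 : ℕ) : ℝ)⁻¹ * ∑ r ∈ Ip (min p1 p2), momentWeight τ p1 p2 r = _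
    push_cast
    ring
  · change -∑ r ∈ Ip (min p1 p2), momentWeight τ p1 p2 r * ((r : ℝ) / 2) = _
    split_ifs with hs
    · refine neg_eq_zero.mpr (Finset.sum_eq_zero fun r hr => ?_)
      have hr0 : r = 0 := by simp only [Ip, Finset.mem_filter, Finset.mem_Icc] at hr; omega
      simp [hr0]
    · have hs' : (((p1 + p2) / 2 : ℕ) : ℝ) ≠ 0 := Nat.cast_ne_zero.mpr hs
      rw [Finset.sum_div, Finset.sum_div, ← Finset.sum_sub_distrib, ← Finset.sum_neg_distrib]
      refine Finset.sum_congr rfl fun r _ => ?_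
      field_simp
      ring

theorem elliptic_moment_expansion_general (τ : ℝ)
    (p1 p2 : ℕ) (hpar : p1 % 2 = p2 % 2) :
    ∃ K > 0, ∀ N : ℕ, 1 ≤ N →
      |Mell τ p1 p2 N - C1 τ p1 p2 * (N : ℝ) ^ ((p1 + p2) / 2 + 1)
          - C2 τ p1 p2 * (N : ℝ) ^ ((p1 + p2) / 2)|
        ≤ K * (N : ℝ) ^ ((((p1 + p2) / 2 : ℕ) : ℤ) - 1) := by
  obtain ⟨W, hW, hlead⟩ := exists_hasLeadingCoeffs_eval_eq_Mell τ hpar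
  obtain ⟨K, hK, hbound⟩ := hlead.exists_abs_eval_sub_le
  exact ⟨K, hK, fun N hN => by simpa only [hW] using hbound N (by exact_mod_cast hN)⟩

/-- For `τ ∈ (0,1)` and `p1 ≡ p2 (mod 2)` with `s = (p1+p2)/2`, there is a
constant `K > 0` such that for all `N ≥ 1`,
`|M_τ(p1,p2,N) − C1(p1,p2) N^{s+1} − C2(p1,p2) N^s| ≤ K N^{s−1}`. -/
theorem elliptic_moment_expansion (τ : ℝ) (hτ0 : 0 < τ) (hτ1 : τ < 1)
    (p1 p2 : ℕ) (hpar : p1 % 2 = p2 % 2) :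
    ∃ K > 0, ∀ N : ℕ, 1 ≤ N →
      |Mell τ p1 p2 N - C1 τ p1 p2 * (N : ℝ) ^ ((p1 + p2) / 2 + 1)
          - C2 τ p1 p2 * (N : ℝ) ^ ((p1 + p2) / 2)|
        ≤ K * (N : ℝ) ^ ((((p1 + p2) / 2 : ℕ) : ℤ) - 1) :=
  elliptic_moment_expansion_general τ p1 p2 hpar
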